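/- Let R be a principal ideal domain. The assignment f ↦ S_f induces a bijection between the set of GL₂(R)-orbits of binary cubic forms over R (under the twisted action A∗f = (det A)⁻¹ f(aY₁ + cY₂, bY₁ + dY₂)) and the set of isomorphism classes of cubic rings over R (commutative unital R-algebras free of rank 3 as R-modules). That is: every cubic ring over R is R-algebra isomorphic to S_f for some binary cubic form f, and two binary cubic forms f, f′ lie in the same GL₂(R)-orbit if and only if S_f and S_{f′} are isomorphic as R-algebras. -/

import Mathlib

universe u v

/-- The multiplication of the cubic ring `S_f` associated to the binary cubic form
`f = f₃Y₁³ + f₂Y₁²Y₂ + f₁Y₁Y₂² + f₀Y₂³`, on coordinates with respect to its basis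
`(1, α, β)`: `α·β = −f₀f₃`, `α² = −f₁f₃ + f₂α − f₃β`, `β² = −f₀f₂ + f₀α − f₁β`. -/
def cubicMul {R : Type*} [CommRing R] (f₀ f₁ f₂ f₃ : R) (x y : Fin 3 → R) : Fin 3 → R :=
  ![x 0 * y 0 - f₁ * f₃ * (x 1 * y 1) - f₀ * f₃ * (x 1 * y 2 + x 2 * y 1)
      - f₀ * f₂ * (x 2 * y 2),
    x 0 * y 1 + x 1 * y 0 + f₂ * (x 1 * y 1) + f₀ * (x 2 * y 2),
    x 0 * y 2 + x 2 * y 0 - f₃ * (x 1 * y 1) - f₁ * (x 2 * y 2)]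

/-- The binary cubic forms `f = f₃Y₁³ + f₂Y₁²Y₂ + f₁Y₁Y₂² + f₀Y₂³` and `f'` lie in the
same `GL₂(R)`-orbit for the twisted action `A∗f = (det A)⁻¹ f(aY₁ + cY₂, bY₁ + dY₂)`,
i.e. `f' = A∗f` for some `A = ((a,b),(c,d)) ∈ GL₂(R)` (with unit determinant `u`);
the coefficients of `A∗f` are spelled out by the four equations below. -/
def SameGL2Orbit {R : Type*} [CommRing R] (f₀ f₁ f₂ f₃ f₀' f₁' f₂' f₃' : R) : Prop :=
  ∃ a b c d : R, ∃ u : Rˣ, (u : R) = a * d - b * c ∧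
    (u : R) * f₃' = f₃ * a ^ 3 + f₂ * a ^ 2 * b + f₁ * a * b ^ 2 + f₀ * b ^ 3 ∧
    (u : R) * f₂' = 3 * f₃ * a ^ 2 * c + f₂ * (a ^ 2 * d + 2 * a * b * c)
        + f₁ * (2 * a * b * d + b ^ 2 * c) + 3 * f₀ * b ^ 2 * d ∧
    (u : R) * f₁' = 3 * f₃ * a * c ^ 2 + f₂ * (2 * a * c * d + b * c ^ 2)
        + f₁ * (a * d ^ 2 + 2 * b * c * d) + 3 * f₀ * b * d ^ 2 ∧
    (u : R) * f₀' = f₃ * c ^ 3 + f₂ * c ^ 2 * d + f₁ * c * d ^ 2 + f₀ * d ^ 3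

/-- The cubic rings `S_f` and `S_{f'}` are isomorphic as `R`-algebras: there is an
`R`-linear equivalence of the underlying rank-`3` free modules carrying `1` to `1` and
intertwining the two multiplications. -/
def CubicRingsIsomorphic {R : Type*} [CommRing R] (f₀ f₁ f₂ f₃ f₀' f₁' f₂' f₃' : R) :
    Prop :=
  ∃ e : (Fin 3 → R) ≃ₗ[R] (Fin 3 → R),
    e ![1, 0, 0] = ![1, 0, 0] ∧
    ∀ x y : Fin 3 → R,
      e (cubicMul f₀' f₁' f₂' f₃' x y) = cubicMul f₀ f₁ f₂ f₃ (e x) (e y)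


/-!
Over a principal ideal domain `R`, the quotient of a cubic ring `S` by `R·1` is torsion-free
(if `r • y = c • 1`, the determinants of multiplication by `y` give `r³ ∣ c³`, so `r ∣ c` since
`R` is integrally closed), hence free of rank `2`. Lifting a basis of `S/R` and translating the
lifts by constants gives a basis `(1, ω, θ)` of `S` with `ωθ ∈ R`. Associativity of `ω·ω·θ` and
`ω·θ·θ` then forces the multiplication table of `S_f` on it.

An isomorphism `S_{f'} → S_f` fixing `1` sends `α' ↦ t + aα + bβ`, `β' ↦ s + cα + dβ`, and its
determinant `ad - bc` is a unit. Comparing the `α`- and `β`-coordinates of the images of `α'²`,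
`α'β'`, `β'²` gives exactly `f' = A ∗ f`; conversely, for `f' = A ∗ f` these coordinates
determine `t` and `s`, and then every product relation holds.
-/

open Module

section CubicMul

variable {R : Type*} [CommRing R] (f₀ f₁ f₂ f₃ : R)

theorem cubicMul_comm (x y : Fin 3 → R) :
    cubicMul f₀ f₁ f₂ f₃ x y = cubicMul f₀ f₁ f₂ f₃ y x := by
  ext i; fin_cases i <;> simp [cubicMul] <;> ring

theorem one_cubicMul (x : Fin 3 → R) : cubicMul f₀ f₁ f₂ f₃ ![1, 0, 0] x = x := by
  ext i; fin_cases i <;> simp [cubicMul]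

def cubicMulBilin : (Fin 3 → R) →ₗ[R] (Fin 3 → R) →ₗ[R] Fin 3 → R :=
  LinearMap.mk₂ R (cubicMul f₀ f₁ f₂ f₃)
    (fun _ _ _ => by ext i; fin_cases i <;> simp [cubicMul] <;> ring)
    (fun _ _ _ => by ext i; fin_cases i <;> simp [cubicMul] <;> ring)
    (fun _ _ _ => by ext i; fin_cases i <;> simp [cubicMul] <;> ring)
    (fun _ _ _ => by ext i; fin_cases i <;> simp [cubicMul] <;> ring)

@[simp]
theorem cubicMulBilin_apply (x y : Fin 3 → R) :
    cubicMulBilin f₀ f₁ f₂ f₃ x y = cubicMul f₀ f₁ f₂ f₃ x y :=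
  rfl

variable {f₀ f₁ f₂ f₃}

theorem map_mul_eq_cubicMul {M : Type*} [AddCommGroup M] [Module R M]
    (μ : M →ₗ[R] M →ₗ[R] M) (hμ : ∀ x y, μ x y = μ y x) (b : Basis (Fin 3) R M)
    (hb : ∀ x, μ (b 0) x = x) (e : M →ₗ[R] Fin 3 → R) (he : e (b 0) = ![1, 0, 0])
    (h11 : e (μ (b 1) (b 1)) = cubicMul f₀ f₁ f₂ f₃ (e (b 1)) (e (b 1)))
    (h12 : e (μ (b 1) (b 2)) = cubicMul f₀ f₁ f₂ f₃ (e (b 1)) (e (b 2)))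
    (h22 : e (μ (b 2) (b 2)) = cubicMul f₀ f₁ f₂ f₃ (e (b 2)) (e (b 2))) (x y : M) :
    e (μ x y) = cubicMul f₀ f₁ f₂ f₃ (e x) (e y) := by
  have hle : ∀ i j, i ≤ j → e (μ (b i) (b j)) = cubicMul f₀ f₁ f₂ f₃ (e (b i)) (e (b j)) := by
    intro i j hij
    fin_cases i <;> fin_cases j <;> simp [hb, he, one_cubicMul, h11, h12, h22] at hij ⊢
  have hbilin : μ.compr₂ e = (cubicMulBilin f₀ f₁ f₂ f₃).compl₁₂ e e := by
    refine b.ext fun i => b.ext fun j => ?_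
    rcases le_total i j with hij | hij
    · exact hle i j hij
    · simpa [hμ (b i), cubicMul_comm] using hle j i hij
  exact congr($hbilin x y)

end CubicMul

section Orbits

variable {R : Type*} [CommRing R] {f₀ f₁ f₂ f₃ f₀' f₁' f₂' f₃' : R}

theorem SameGL2Orbit.cubicRingsIsomorphic (h : SameGL2Orbit f₀ f₁ f₂ f₃ f₀' f₁' f₂' f₃') :
    CubicRingsIsomorphic f₀ f₁ f₂ f₃ f₀' f₁' f₂' f₃' := by
  obtain ⟨a, b, c, d, u, hu, h3, h2, h1, h0⟩ := h
  rw [← u.inv_mul_cancel_left f₀', ← u.inv_mul_cancel_left f₁', ← u.inv_mul_cancel_left f₂',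
    ← u.inv_mul_cancel_left f₃', h0, h1, h2, h3]
  clear h0 h1 h2 h3
  have hvu : (↑u⁻¹ : R) * (a * d - b * c) = 1 := by rw [← hu, u.inv_mul]
  -- `e` is `α' ↦ t + aα + bβ`, `β' ↦ s + cα + dβ`, where `(t, s)` solves the linear system
  -- given by the `α`- and `β`-coordinates of `e(α')e(β') = e(α'β') ∈ R`.
  let M : Matrix (Fin 3) (Fin 3) R :=
    !![1, ↑u⁻¹ * (f₃ * a ^ 2 * c + f₂ * a * b * c + f₁ * a * b * d + f₀ * b ^ 2 * d),
      -(↑u⁻¹ * (f₃ * a * c ^ 2 + f₂ * a * c * d + f₁ * b * c * d + f₀ * b * d ^ 2));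
      0, a, c;
      0, b, d]
  have hM : IsUnit M.det := by simp [M, Matrix.det_fin_three, mul_comm c b, ← hu]
  let e := M.toLinearEquiv' (M.invertibleOfIsUnitDet hM)
  refine ⟨e, ?_, map_mul_eq_cubicMul (cubicMulBilin _ _ _ _) (cubicMul_comm _ _ _ _)
    (Pi.basisFun R (Fin 3)) (fun x => ?_) e.toLinearMap ?_ ?_ ?_ ?_⟩
  -- each coordinate is a polynomial identity modulo `u⁻¹ (ad - bc) = 1`
  all_goals
    ext i; fin_cases i <;>
      simp [e, M, Matrix.toLinearEquiv', Matrix.mulVec, dotProduct, Fin.sum_univ_three,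
        cubicMul] <;>
      grind

open Matrix in
theorem CubicRingsIsomorphic.sameGL2Orbit (h : CubicRingsIsomorphic f₀ f₁ f₂ f₃ f₀' f₁' f₂' f₃') :
    SameGL2Orbit f₀ f₁ f₂ f₃ f₀' f₁' f₂' f₃' := by
  obtain ⟨e, he, hmul⟩ := h
  set A := LinearMap.toMatrix' (e : (Fin 3 → R) →ₗ[R] Fin 3 → R)
  have hA : ∀ x, e x = A *ᵥ x := fun x => (LinearMap.toMatrix'_mulVec _ x).symm
  simp only [hA] at he hmul
  obtain ⟨h00, h10, h20⟩ : A 0 0 = 1 ∧ A 1 0 = 0 ∧ A 2 0 = 0 := by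
    simpa [mulVec, dotProduct, Fin.sum_univ_three, funext_iff, Fin.forall_fin_succ] using he
  obtain ⟨u, hu⟩ : IsUnit (A 1 1 * A 2 2 - A 2 1 * A 1 2) := by
    have hdet : IsUnit A.det := by rw [LinearMap.det_toMatrix']; exact e.isUnit_det'
    rw [det_fin_three, h00, h10, h20] at hdet
    convert hdet using 1; ring
  have hαα := hmul ![0, 1, 0] ![0, 1, 0]
  have hαβ := hmul ![0, 1, 0] ![0, 0, 1]
  have hββ := hmul ![0, 0, 1] ![0, 0, 1]
  simp only [cubicMul, Fin.isValue, cons_val_zero, mul_zero, cons_val_one, mul_one, zero_sub,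
    cons_val, add_zero, sub_zero, zero_add, mulVec, dotProduct, Fin.sum_univ_three, h00, h10, h20,
    funext_iff, mul_neg, Fin.forall_fin_succ, one_mul, cons_val_succ, Fin.succ_zero_eq_one,
    zero_mul, neg_zero, cons_val_fin_one, Fin.succ_one_eq_two, IsEmpty.forall_iff, and_true,
    sub_self] at hαα hαβ hββ
  obtain ⟨-, hαα₁, hαα₂⟩ := hαα
  obtain ⟨-, hαβ₁, hαβ₂⟩ := hαβ
  obtain ⟨-, hββ₁, hββ₂⟩ := hββ
  refine ⟨A 1 1, A 2 1, A 1 2, A 2 2, u, hu, ?_, ?_, ?_, ?_⟩ <;> rw [hu]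
  · linear_combination A 2 1 * hαα₁ - A 1 1 * hαα₂
  · linear_combination A 2 2 * hαα₁ - A 1 2 * hαα₂ + 2 * A 2 1 * hαβ₁ - 2 * A 1 1 * hαβ₂
  · linear_combination A 2 1 * hββ₁ - A 1 1 * hββ₂ + 2 * A 2 2 * hαβ₁ - 2 * A 1 2 * hαβ₂
  · linear_combination A 2 2 * hββ₁ - A 1 2 * hββ₂

theorem sameGL2Orbit_iff_cubicRingsIsomorphic :
    SameGL2Orbit f₀ f₁ f₂ f₃ f₀' f₁' f₂' f₃' ↔ CubicRingsIsomorphic f₀ f₁ f₂ f₃ f₀' f₁' f₂' f₃' :=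
  ⟨SameGL2Orbit.cubicRingsIsomorphic, CubicRingsIsomorphic.sameGL2Orbit⟩

end Orbits

section TorsionFree

variable {R S : Type*} [CommRing R] [IsDomain R] [IsIntegrallyClosed R] [CommRing S] [Algebra R S]
  [Module.Free R S] [Module.Finite R S] [Nontrivial S]

theorem dvd_of_smul_eq_algebraMap {r c : R} {y : S} (h : r • y = algebraMap R S c) : r ∣ c := by
  have hlmul : r • Algebra.lmul R S y = c • LinearMap.id := by
    rw [Algebra.smul_def] at h
    ext x
    simp [Algebra.smul_def, ← mul_assoc, h]
  have hdet := congrArg LinearMap.det hlmul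
  rw [LinearMap.det_smul, LinearMap.det_smul, LinearMap.det_id, mul_one] at hdet
  exact (IsIntegrallyClosed.pow_dvd_pow_iff finrank_pos.ne').mp ⟨_, hdet.symm⟩

theorem isTorsionFree_quotient_span_one : IsTorsionFree R (S ⧸ R ∙ (1 : S)) := by
  refine .of_smul_eq_zero fun r q hrq => ?_
  obtain ⟨y, rfl⟩ := Submodule.mkQ_surjective _ q
  rw [← map_smul, Submodule.mkQ_apply, Submodule.Quotient.mk_eq_zero,
    Submodule.mem_span_singleton] at hrq
  obtain ⟨c, hc⟩ := hrq
  obtain ⟨d, rfl⟩ :=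
    dvd_of_smul_eq_algebraMap (hc.symm.trans (Algebra.algebraMap_eq_smul_one c).symm)
  have : r • (y - d • (1 : S)) = 0 := by rw [smul_sub, smul_smul, ← hc, sub_self]
  refine (smul_eq_zero.mp this).imp_right fun hy => ?_
  rw [Submodule.mkQ_apply, Submodule.Quotient.mk_eq_zero, sub_eq_zero.mp hy]
  exact Submodule.smul_mem _ _ (Submodule.mem_span_singleton_self 1)

end TorsionFree

namespace Module.Basis

section FinConsOfQuotient

variable {R M : Type*} [Ring R] [AddCommGroup M] [Module R M] {x : M} {k : ℕ}

theorem linearIndependent_finCons_of_quotient (hx : ∀ r : R, r • x = 0 → r = 0)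
    {w : Fin k → M} (hw : LinearIndependent R ((R ∙ x).mkQ ∘ w)) :
    LinearIndependent R (Fin.cons x w : Fin (k + 1) → M) := by
  rw [Fintype.linearIndependent_iff] at hw ⊢
  intro g hg
  simp only [Fin.sum_univ_succ, Fin.cons_zero, Fin.cons_succ] at hg
  have hx0 : (R ∙ x).mkQ x = 0 :=
    (Submodule.Quotient.mk_eq_zero _).mpr (Submodule.mem_span_singleton_self x)
  have htail : ∀ i : Fin k, g i.succ = 0 := hw _ <| by
    simpa only [map_add, map_smul, map_sum, hx0, smul_zero, zero_add, map_zero,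
      Function.comp_apply] using congrArg (R ∙ x).mkQ hg
  have hhead : g 0 = 0 := hx _ <| by simpa [htail] using hg
  exact Fin.cases hhead htail

theorem span_finCons_of_quotient {w : Fin k → M}
    (hw : Submodule.span R (Set.range ((R ∙ x).mkQ ∘ w)) = ⊤) :
    Submodule.span R (Set.range (Fin.cons x w : Fin (k + 1) → M)) = ⊤ := by
  rw [Fin.range_cons, Submodule.span_insert, ← Submodule.map_mkQ_eq_top, Submodule.map_span,
    ← Set.range_comp, hw]

noncomputable def finConsOfQuotient (hx : ∀ r : R, r • x = 0 → r = 0)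
    (m : Basis (Fin k) R (M ⧸ R ∙ x)) (w : Fin k → M) (hw : ∀ i, (R ∙ x).mkQ (w i) = m i) :
    Basis (Fin (k + 1)) R M :=
  have hw : (R ∙ x).mkQ ∘ w = m := funext hw
  .mk (v := Fin.cons x w)
    (linearIndependent_finCons_of_quotient hx (by rw [hw]; exact m.linearIndependent))
    (span_finCons_of_quotient (by rw [hw]; exact m.span_eq)).ge

@[simp]
theorem coe_finConsOfQuotient (hx : ∀ r : R, r • x = 0 → r = 0)
    (m : Basis (Fin k) R (M ⧸ R ∙ x)) (w : Fin k → M) (hw : ∀ i, (R ∙ x).mkQ (w i) = m i) :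
    ⇑(finConsOfQuotient hx m w hw) = Matrix.vecCons x w := by
  simp [finConsOfQuotient, Matrix.vecCons]

end FinConsOfQuotient

variable {R S : Type*} [CommRing R] [CommRing S] [Algebra R S] (b : Basis (Fin 3) R S)

theorem eq_algebraMap_add_of_eq_one (hb : b 0 = 1) (x : S) :
    x = algebraMap R S (b.repr x 0) + algebraMap R S (b.repr x 1) * b 1
      + algebraMap R S (b.repr x 2) * b 2 := by
  conv_lhs => rw [← b.sum_repr x]
  simp [Fin.sum_univ_three, Algebra.smul_def, hb]

theorem equivFun_algebraMap_add_of_eq_one (hb : b 0 = 1) (c₀ c₁ c₂ : R) :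
    b.equivFun (algebraMap R S c₀ + algebraMap R S c₁ * b 1 + algebraMap R S c₂ * b 2)
      = ![c₀, c₁, c₂] := by
  rw [← LinearEquiv.eq_symm_apply, equivFun_symm_apply]
  simp [Fin.sum_univ_three, Algebra.smul_def, hb]

theorem equivFun_one_of_eq_one (hb : b 0 = 1) : b.equivFun 1 = ![1, 0, 0] := by
  simpa using b.equivFun_algebraMap_add_of_eq_one hb 1 0 0

theorem exists_equivFun_mul_eq_cubicMul (hb : b 0 = 1) {C : R} (hC : b 1 * b 2 = algebraMap R S C) :
    ∃ f₀ f₁ f₂ f₃ : R,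
      ∀ x y, b.equivFun (x * y) = cubicMul f₀ f₁ f₂ f₃ (b.equivFun x) (b.equivFun y) := by
  set A := b.repr (b 1 * b 1)
  set B := b.repr (b 2 * b 2)
  have hA := b.eq_algebraMap_add_of_eq_one hb (b 1 * b 1)
  have hB := b.eq_algebraMap_add_of_eq_one hb (b 2 * b 2)
  -- `(ω·ω)·θ = ω·(ω·θ)` and `(θ·θ)·ω = θ·(ω·θ)` in the basis `(1, ω, θ)`
  have hααβ : algebraMap R S (A 1 * C + A 2 * B 0) + algebraMap R S (A 2 * B 1) * b 1
      + algebraMap R S (A 0 + A 2 * B 2) * b 2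
      = algebraMap R S 0 + algebraMap R S C * b 1 + algebraMap R S 0 * b 2 := by
    simp only [map_add, map_mul, map_zero]
    linear_combination -b 2 * hA - algebraMap R S (A 2) * hB + (b 1 - algebraMap R S (A 1)) * hC
  have hαββ : algebraMap R S (B 2 * C + B 1 * A 0) + algebraMap R S (B 0 + B 1 * A 1) * b 1
      + algebraMap R S (B 1 * A 2) * b 2
      = algebraMap R S 0 + algebraMap R S 0 * b 1 + algebraMap R S C * b 2 := by
    simp only [map_add, map_mul, map_zero]
    linear_combination -b 1 * hB - algebraMap R S (B 1) * hA + (b 2 - algebraMap R S (B 2)) * hC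
  replace hααβ := congrArg b.equivFun hααβ
  replace hαββ := congrArg b.equivFun hαββ
  rw [b.equivFun_algebraMap_add_of_eq_one hb, b.equivFun_algebraMap_add_of_eq_one hb]
    at hααβ hαββ
  have hC' : C = A 2 * B 1 := by simpa using (congrFun hααβ 1).symm
  have hA0 : A 0 = -(A 2 * B 2) := by simpa [add_eq_zero_iff_eq_neg] using congrFun hααβ 2
  have hB0 : B 0 = -(B 1 * A 1) := by simpa [add_eq_zero_iff_eq_neg] using congrFun hαββ 1
  have h11 : b.equivFun (b 1 * b 1) = ![A 0, A 1, A 2] := by ext i; fin_cases i <;> rfl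
  have h12 : b.equivFun (b 1 * b 2) = ![C, 0, 0] := by
    simpa [hC] using b.equivFun_algebraMap_add_of_eq_one hb C 0 0
  have h22 : b.equivFun (b 2 * b 2) = ![B 0, B 1, B 2] := by ext i; fin_cases i <;> rfl
  refine ⟨B 1, -B 2, A 1, -A 2, map_mul_eq_cubicMul (LinearMap.mul R S) mul_comm b
    (by simp [hb]) b.equivFun.toLinearMap (by simpa [hb] using b.equivFun_one_of_eq_one hb)
    ?_ ?_ ?_⟩
  all_goals ext i; fin_cases i <;> simp [cubicMul, h11, h12, h22, hA0, hB0, hC', mul_comm]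

end Module.Basis

theorem exists_basis_one_mul_eq_algebraMap {R S : Type*} [CommRing R] [IsDomain R]
    [IsPrincipalIdealRing R] [CommRing S] [Algebra R S] [Module.Free R S]
    (h3 : finrank R S = 3) :
    ∃ (b : Basis (Fin 3) R S) (C : R), b 0 = 1 ∧ b 1 * b 2 = algebraMap R S C := by
  have : Module.Finite R S := Module.finite_of_finrank_pos (by omega)
  have : Nontrivial S := Module.nontrivial_of_finrank_pos (R := R) (by omega)
  have : IsTorsionFree R (S ⧸ R ∙ (1 : S)) := isTorsionFree_quotient_span_one
  have h1 : ∀ r : R, r • (1 : S) = 0 → r = 0 := fun r hr =>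
    (smul_eq_zero.mp hr).resolve_right one_ne_zero
  have hQ : finrank R (S ⧸ R ∙ (1 : S)) = 2 := by
    let m := Module.finBasis R (S ⧸ R ∙ (1 : S))
    choose w hw using fun i => (R ∙ (1 : S)).mkQ_surjective (m i)
    have := finrank_eq_card_basis (Basis.finConsOfQuotient h1 m w hw)
    rw [h3, Fintype.card_fin] at this
    omega
  let m := Module.finBasisOfFinrankEq R _ hQ
  choose w hw using fun i => (R ∙ (1 : S)).mkQ_surjective (m i)
  let b₁ := Basis.finConsOfQuotient h1 m w hw
  set P := b₁.repr (w 0 * w 1)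
  have hP : w 0 * w 1 = algebraMap R S (P 0) + algebraMap R S (P 1) * w 0
      + algebraMap R S (P 2) * w 1 := by
    simpa [b₁] using b₁.eq_algebraMap_add_of_eq_one (by simp [b₁]) (w 0 * w 1)
  have hmk : ∀ c : R, (R ∙ (1 : S)).mkQ (algebraMap R S c) = 0 := fun c => by
    rw [Algebra.algebraMap_eq_smul_one, map_smul, Submodule.mkQ_apply,
      (Submodule.Quotient.mk_eq_zero _).mpr (Submodule.mem_span_singleton_self 1), smul_zero]
  let b := Basis.finConsOfQuotient h1 m ![w 0 - algebraMap R S (P 2), w 1 - algebraMap R S (P 1)]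
    (Fin.forall_fin_two.mpr ⟨by simp [hmk, hw, -Submodule.mkQ_apply],
      by simp [hmk, hw, -Submodule.mkQ_apply]⟩)
  refine ⟨b, P 0 + P 1 * P 2, by simp [b], ?_⟩
  simp only [Basis.coe_finConsOfQuotient, Matrix.cons_val_one, Matrix.cons_val_zero,
    Matrix.cons_val, map_add, map_mul, b]
  linear_combination hP

/-- **The Delone–Faddeev correspondence** over a principal ideal domain `R`:
the assignment `f ↦ S_f` induces a bijection between `GL₂(R)`-orbits of binary cubic
forms over `R` and isomorphism classes of cubic rings over `R`.  Namely:
(1) every cubic ring over `R` — i.e. every commutative unital `R`-algebra free of rank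
`3` as an `R`-module — is `R`-algebra isomorphic to `S_f` for some binary cubic form
`f`; and (2) two binary cubic forms lie in the same `GL₂(R)`-orbit if and only if the
associated cubic rings are isomorphic as `R`-algebras. -/
theorem stmt_6 (R : Type u) [CommRing R] [IsDomain R] [IsPrincipalIdealRing R] :
    (∀ (S : Type v) [CommRing S] [Algebra R S] [Module.Free R S],
      Module.finrank R S = 3 →
      ∃ (f₀ f₁ f₂ f₃ : R) (e : S ≃ₗ[R] (Fin 3 → R)),
        e 1 = ![1, 0, 0] ∧
        ∀ x y : S, e (x * y) = cubicMul f₀ f₁ f₂ f₃ (e x) (e y)) ∧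
    (∀ f₀ f₁ f₂ f₃ f₀' f₁' f₂' f₃' : R,
      SameGL2Orbit f₀ f₁ f₂ f₃ f₀' f₁' f₂' f₃' ↔
        CubicRingsIsomorphic f₀ f₁ f₂ f₃ f₀' f₁' f₂' f₃') := by
  refine ⟨fun S _ _ _ h3 => ?_, fun _ _ _ _ _ _ _ _ => sameGL2Orbit_iff_cubicRingsIsomorphic⟩
  obtain ⟨b, C, hb, hC⟩ := exists_basis_one_mul_eq_algebraMap h3
  obtain ⟨f₀, f₁, f₂, f₃, hf⟩ := b.exists_equivFun_mul_eq_cubicMul hb hC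
  exact ⟨f₀, f₁, f₂, f₃, b.equivFun, b.equivFun_one_of_eq_one hb, hf⟩
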